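/- Let λ > 0, Δ > 0, δ ∈ (0,1), set ε = (Δ/λ)·√(2·ln(1.25/δ)), and assume ε ≤ 1. Let Z be a real random variable with law N(0, λ²). Then P(Z > λ²·ε/Δ − Δ/2) ≤ δ. -/

import Mathlib

/-!
Write `c = √(2 log(1.25/δ))`, so that `δ = 1.25 e^{-c²/2}` and the threshold is `λu` with
`u = c - ε/(2c)`; then `u² = c² - ε + (ε/(2c))² ≥ c² - 1`.

If `u ≥ 0`, shifting the density by `u` and using `(x + u)² ≥ x² + u²` for `x ≥ 0` gives
`P(Z > λu) ≤ e^{-u²/2}/2 ≤ e^{1/2} e^{-c²/2}/2 ≤ δ`.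

If `u < 0`, then `c² < ε/2 ≤ 1/2`, so `δ ≥ 1.25 (1 - c²/2) ≥ 15/16`, while bounding the density
by its maximum on `(λu, 0]` gives `P(Z > λu) ≤ 1/2 + |u|/√(2π) ≤ 11/12`, since `δ < 1` forces
`c ≥ 0.6`.
-/

open MeasureTheory ProbabilityTheory Real
open scoped NNReal ENNReal

namespace ProbabilityTheory

lemma gaussianReal_Ioi_mean {μ : ℝ} {v : ℝ≥0} (hv : v ≠ 0) :
    gaussianReal μ v (Set.Ioi μ) = 2⁻¹ := by
  have := nullSingletonClass_gaussianReal (μ := μ) hv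
  have hsymm : gaussianReal μ v (Set.Iio μ) = gaussianReal μ v (Set.Ioi μ) := by
    have hmap := gaussianReal_map_const_sub (μ := μ) (v := v) (2 * μ)
    rw [show 2 * μ - μ = μ by ring] at hmap
    conv_rhs => rw [← hmap, Measure.map_apply (by fun_prop) measurableSet_Ioi]
    congr 1
    ext x
    simp only [Set.mem_Iio, Set.mem_preimage, Set.mem_Ioi]
    constructor <;> intro h <;> linarith
  have htotal : gaussianReal μ v (Set.Iio μ) + gaussianReal μ v (Set.Ioi μ) = 1 := by
    rw [← measure_union Set.Iio_disjoint_Ioi_same measurableSet_Ioi, Set.Iio_union_Ioi,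
      measure_compl (measurableSet_singleton _) (measure_ne_top _ _), measure_singleton]
    simp
  rw [hsymm, ← two_mul, mul_comm] at htotal
  exact ENNReal.eq_inv_of_mul_eq_one_left htotal

lemma gaussianPDFReal_le (μ : ℝ) (v : ℝ≥0) (x : ℝ) :
    gaussianPDFReal μ v x ≤ (√(2 * π * v))⁻¹ := by
  rw [gaussianPDFReal]
  exact mul_le_of_le_one_right (by positivity) (exp_le_one_iff.mpr (by
    apply div_nonpos_of_nonpos_of_nonneg <;> nlinarith [sq_nonneg (x - μ), v.2]))

lemma gaussianReal_le_mul_volume (μ : ℝ) {v : ℝ≥0} (hv : v ≠ 0) (s : Set ℝ) :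
    gaussianReal μ v s ≤ ENNReal.ofReal (√(2 * π * v))⁻¹ * volume s := by
  rw [gaussianReal_apply μ hv, ← setLIntegral_const]
  exact lintegral_mono fun x ↦ ENNReal.ofReal_le_ofReal (gaussianPDFReal_le μ v x)

lemma gaussianPDFReal_sub_le_exp_mul {μ u x : ℝ} (v : ℝ≥0) (hu : 0 ≤ u) (hx : μ ≤ x) :
    gaussianPDFReal (μ - u) v x ≤ exp (-u ^ 2 / (2 * v)) * gaussianPDFReal μ v x := by
  simp only [gaussianPDFReal]
  rw [mul_left_comm, ← exp_add]
  gcongr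
  rw [← add_div, ← neg_add]
  gcongr
  nlinarith

lemma gaussianReal_Ioi_add_le {μ u : ℝ} {v : ℝ≥0} (hv : v ≠ 0) (hu : 0 ≤ u) :
    gaussianReal μ v (Set.Ioi (μ + u)) ≤ ENNReal.ofReal (exp (-u ^ 2 / (2 * v)) / 2) := by
  have hshift : gaussianReal μ v (Set.Ioi (μ + u)) = gaussianReal (μ - u) v (Set.Ioi μ) := by
    conv_lhs => rw [← sub_add_cancel μ u, ← gaussianReal_map_add_const,
      Measure.map_apply (by fun_prop) measurableSet_Ioi, Set.preimage_add_const_Ioi]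
    rw [sub_add_cancel, add_sub_cancel_right]
  calc gaussianReal μ v (Set.Ioi (μ + u))
      = ∫⁻ x in Set.Ioi μ, gaussianPDF (μ - u) v x := by rw [hshift, gaussianReal_apply _ hv]
    _ ≤ ∫⁻ x in Set.Ioi μ, ENNReal.ofReal (exp (-u ^ 2 / (2 * v))) * gaussianPDF μ v x := by
        refine setLIntegral_mono (by fun_prop) fun x hx ↦ ?_
        rw [gaussianPDF, gaussianPDF, ← ENNReal.ofReal_mul (exp_nonneg _)]
        exact ENNReal.ofReal_le_ofReal (gaussianPDFReal_sub_le_exp_mul v hu (le_of_lt hx))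
    _ = ENNReal.ofReal (exp (-u ^ 2 / (2 * v))) * 2⁻¹ := by
        rw [lintegral_const_mul _ (measurable_gaussianPDF _ _), ← gaussianReal_apply _ hv,
          gaussianReal_Ioi_mean hv]
    _ = ENNReal.ofReal (exp (-u ^ 2 / (2 * v)) / 2) := by
        rw [ENNReal.ofReal_div_of_pos two_pos, ENNReal.ofReal_ofNat]
        exact (div_eq_mul_inv _ _).symm

lemma gaussianReal_Ioi_add_le_of_nonpos {μ u : ℝ} {v : ℝ≥0} (hv : v ≠ 0) (hu : u ≤ 0) :
    gaussianReal μ v (Set.Ioi (μ + u)) ≤ ENNReal.ofReal (1 / 2 + -u / √(2 * π * v)) := by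
  calc gaussianReal μ v (Set.Ioi (μ + u))
      ≤ gaussianReal μ v (Set.Ioc (μ + u) μ) + gaussianReal μ v (Set.Ioi μ) := by
        rw [← Set.Ioc_union_Ioi_eq_Ioi (show μ + u ≤ μ by linarith)]
        exact measure_union_le _ _
    _ ≤ ENNReal.ofReal (√(2 * π * v))⁻¹ * volume (Set.Ioc (μ + u) μ) + 2⁻¹ := by
        rw [gaussianReal_Ioi_mean hv]
        gcongr
        exact gaussianReal_le_mul_volume μ hv _
    _ = ENNReal.ofReal (1 / 2 + -u / √(2 * π * v)) := by
        rw [Real.volume_Ioc, ← ENNReal.ofReal_mul (by positivity), add_comm,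
          ENNReal.ofReal_add (by norm_num) (div_nonneg (neg_nonneg.mpr hu) (sqrt_nonneg _)),
          one_div, ENNReal.ofReal_inv_of_pos two_pos, ENNReal.ofReal_ofNat]
        ring_nf

end ProbabilityTheory

lemma eq_mul_exp_neg_sq_sqrt_two_log_div {a δ : ℝ} (hδ : 0 < δ) (hδa : δ ≤ a) :
    δ = a * exp (-√(2 * log (a / δ)) ^ 2 / 2) := by
  have hlog : 0 ≤ log (a / δ) := log_nonneg ((one_le_div hδ).mpr hδa)
  have ha : 0 < a := by linarith
  rw [sq_sqrt (by linarith), neg_div, mul_div_cancel_left₀ _ two_ne_zero, exp_neg,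
    exp_log (by positivity)]
  field_simp

lemma le_sqrt_two_log_div {δ : ℝ} (hδ : 0 < δ) (hδ1 : δ ≤ 1) :
    0.6 ≤ √(2 * log (1.25 / δ)) := by
  have hlog : 0.2 ≤ log (1.25 / δ) := by
    have := one_sub_inv_le_log_of_pos (x := 1.25 / δ) (by positivity)
    have : δ / 1.25 ≤ 0.8 := by rw [div_le_iff₀ (by norm_num)]; linarith
    rw [inv_div] at *
    linarith
  rw [le_sqrt (by norm_num) (by linarith)]
  linarith

section Threshold

variable {c ε : ℝ}

lemma half_exp_neg_sq_sub_div_le (hc : 0 < c) (hε : ε ≤ 1) :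
    exp (-(c - ε / (2 * c)) ^ 2 / 2) / 2 ≤ 1.25 * exp (-c ^ 2 / 2) := by
  have hsq : (c - ε / (2 * c)) ^ 2 = c ^ 2 - ε + (ε / (2 * c)) ^ 2 := by
    field_simp
    ring
  have hexp : exp (1 / 2) ≤ 2 := by
    have := exp_bound_div_one_sub_of_interval' (x := 1 / 2) (by norm_num) (by norm_num)
    norm_num at this ⊢
    linarith
  calc exp (-(c - ε / (2 * c)) ^ 2 / 2) / 2 ≤ exp (1 / 2 + -c ^ 2 / 2) / 2 := by
        gcongr
        nlinarith [sq_nonneg (ε / (2 * c))]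
    _ = exp (1 / 2) * exp (-c ^ 2 / 2) / 2 := by rw [exp_add]
    _ ≤ 1.25 * exp (-c ^ 2 / 2) := by nlinarith [exp_pos (-c ^ 2 / 2)]

lemma half_add_neg_sub_div_le (hc : 0.6 ≤ c) (hε : ε ≤ 1) (hu : c - ε / (2 * c) < 0) :
    1 / 2 + -(c - ε / (2 * c)) / √(2 * π) ≤ 1.25 * exp (-c ^ 2 / 2) := by
  have hc2 : c ^ 2 < 1 / 2 := by
    rw [sub_neg, lt_div_iff₀ (by positivity)] at hu
    nlinarith
  have hexp : 3 / 4 ≤ exp (-c ^ 2 / 2) := by linarith [add_one_le_exp (-c ^ 2 / 2)]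
  have hsqrt : 2 ≤ √(2 * π) := by
    rw [le_sqrt (by norm_num) (by positivity)]
    linarith [pi_gt_three]
  have hneg : -(c - ε / (2 * c)) ≤ 5 / 6 := by
    have : ε / (2 * c) ≤ 5 / 6 := by
      rw [div_le_iff₀ (by positivity)]
      linarith
    linarith
  calc 1 / 2 + -(c - ε / (2 * c)) / √(2 * π) ≤ 1 / 2 + 5 / 6 / 2 := by gcongr
    _ ≤ 1.25 * exp (-c ^ 2 / 2) := by linarith

end Threshold

theorem stmt15_general {Ω : Type*} [MeasurableSpace Ω] (P : Measure Ω)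
    (lam Δ δ : ℝ) (hlam : 0 < lam) (hΔ : 0 < Δ) (hδ : δ ∈ Set.Ioo (0 : ℝ) 1)
    (ε : ℝ) (hε : ε = (Δ / lam) * Real.sqrt (2 * Real.log (1.25 / δ))) (hε1 : ε ≤ 1)
    (Z : Ω → ℝ) (hZ : Measure.map Z P = gaussianReal 0 (lam ^ 2).toNNReal) :
    P {ω | lam ^ 2 * ε / Δ - Δ / 2 < Z ω} ≤ ENNReal.ofReal δ := by
  obtain ⟨hδ0, hδ1⟩ := hδ
  have hc : 0.6 ≤ √(2 * log (1.25 / δ)) := le_sqrt_two_log_div hδ0 hδ1.le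
  rw [eq_mul_exp_neg_sq_sqrt_two_log_div hδ0 (by linarith : δ ≤ 1.25)]
  set c := √(2 * log (1.25 / δ))
  set u := c - ε / (2 * c)
  have hthreshold : lam ^ 2 * ε / Δ - Δ / 2 = 0 + lam * u := by
    simp only [u, hε]
    field_simp
    ring
  have hlaw : HasLaw Z (gaussianReal 0 (lam ^ 2).toNNReal) P :=
    ⟨aemeasurable_of_map_neZero (by rw [hZ]; infer_instance), hZ⟩
  have hv : ((lam ^ 2).toNNReal : ℝ) = lam ^ 2 := Real.coe_toNNReal _ (sq_nonneg lam)
  have hv0 : (lam ^ 2).toNNReal ≠ 0 := by simp [hlam.ne']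
  rw [hlaw.measure_eq measurableSet_Ioi, hthreshold]
  rcases le_or_gt 0 u with hu | hu
  · refine (gaussianReal_Ioi_add_le hv0 (mul_nonneg hlam.le hu)).trans
      (ENNReal.ofReal_le_ofReal ?_)
    have hscale : -(lam * u) ^ 2 / (2 * lam ^ 2) = -u ^ 2 / 2 := by field_simp
    rw [hv, hscale]
    exact half_exp_neg_sq_sub_div_le (by linarith) hε1
  · refine (gaussianReal_Ioi_add_le_of_nonpos hv0 (by nlinarith)).trans
      (ENNReal.ofReal_le_ofReal ?_)
    have hscale : -(lam * u) / √(2 * π * lam ^ 2) = -u / √(2 * π) := by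
      rw [sqrt_mul (by positivity), sqrt_sq hlam.le]
      field_simp
    rw [hv, hscale]
    exact half_add_neg_sub_div_le hc hε1 hu

/-- Tail bound on the Gaussian privacy-loss random variable: the key analytic step of the
Gaussian mechanism. -/
theorem stmt15 {Ω : Type*} [MeasurableSpace Ω] (P : Measure Ω) [IsProbabilityMeasure P]
    (lam Δ δ : ℝ) (hlam : 0 < lam) (hΔ : 0 < Δ) (hδ : δ ∈ Set.Ioo (0 : ℝ) 1)
    (ε : ℝ) (hε : ε = (Δ / lam) * Real.sqrt (2 * Real.log (1.25 / δ))) (hε1 : ε ≤ 1)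
    (Z : Ω → ℝ) (hZ : Measure.map Z P = gaussianReal 0 (lam ^ 2).toNNReal) :
    P {ω | lam ^ 2 * ε / Δ - Δ / 2 < Z ω} ≤ ENNReal.ofReal δ :=
  stmt15_general P lam Δ δ hlam hΔ hδ ε hε hε1 Z hZ
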